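/- Let h : I → ℝ satisfy h' = φ'·M on I, and let J ⊆ I be a nonempty open subinterval on which A = 0 and φ' > 0 everywhere and B(x) ≠ 0 for all x ∈ J. Then the identity (h − C/B)'·B²·q·φ'·M = C²·(q·M'/M)' holds everywhere on J. -/

import Mathlib

/-!
Since `A` vanishes on the open set `J`, so does `A'`. Expanding all derivatives by the product
and quotient rules turns the identity at a point into an algebraic identity between the jets of
`q`, `φ` and `M` there, and it holds modulo `A = 0` and `A' = 0`: with `K = qφ'`, the difference
of the two sides, cleared of denominators, is `q φ⁴ φ' M⁶ (K' A' − K'' A)`.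
-/

open Real Set MeasureTheory

/-- `A = (qφ')'φ − qφ'²` from Definition 1. -/
noncomputable def Afun (q φ : ℝ → ℝ) : ℝ → ℝ :=
  fun x => deriv (fun y => q y * deriv φ y) x * φ x - q x * (deriv φ x) ^ 2

/-- `B₀ = (qφ')'φ²` from Definition 1. -/
noncomputable def B0fun (q φ : ℝ → ℝ) : ℝ → ℝ :=
  fun x => deriv (fun y => q y * deriv φ y) x * (φ x) ^ 2

/-- `B = (qφ'M)'φ²` from Definition 1. -/
noncomputable def Bfun (q φ M : ℝ → ℝ) : ℝ → ℝ :=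
  fun x => deriv (fun y => q y * deriv φ y * M y) x * (φ x) ^ 2

/-- `C = qφ²φ'²M²` from Definition 1. -/
noncomputable def Cfun (q φ M : ℝ → ℝ) : ℝ → ℝ :=
  fun x => q x * (φ x) ^ 2 * (deriv φ x) ^ 2 * (M x) ^ 2

/-- `E₂ = A q φ φ'² − B₀' q φ φ' + (qφ')' φ q (φ²φ')'` from Definition 1. -/
noncomputable def E2fun (q φ : ℝ → ℝ) : ℝ → ℝ :=
  fun x => Afun q φ x * q x * φ x * (deriv φ x) ^ 2
    - deriv (B0fun q φ) x * q x * φ x * deriv φ x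
    + deriv (fun y => q y * deriv φ y) x * φ x * q x *
        deriv (fun y => (φ y) ^ 2 * deriv φ y) x

/-- `E₁ = A²φ + E₂` from Definition 1. -/
noncomputable def E1fun (q φ : ℝ → ℝ) : ℝ → ℝ :=
  fun x => (Afun q φ x) ^ 2 * φ x + E2fun q φ x

/-- `F₁ = (B − √(B²−4AC))/(2A)` from Definition 1. -/
noncomputable def F1fun (q φ M : ℝ → ℝ) : ℝ → ℝ :=
  fun x => (Bfun q φ M x -
    Real.sqrt ((Bfun q φ M x) ^ 2 - 4 * Afun q φ x * Cfun q φ M x)) / (2 * Afun q φ x)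

/-- `F₂ = (B + √(B²−4AC))/(2A)` from Definition 1. -/
noncomputable def F2fun (q φ M : ℝ → ℝ) : ℝ → ℝ :=
  fun x => (Bfun q φ M x +
    Real.sqrt ((Bfun q φ M x) ^ 2 - 4 * Afun q φ x * Cfun q φ M x)) / (2 * Afun q φ x)

open Filter Topology

theorem hasDerivAt_deriv_mul {f g : ℝ → ℝ} {x f₂ g₂ : ℝ}
    (hf : ∀ᶠ y in 𝓝 x, DifferentiableAt ℝ f y) (hg : ∀ᶠ y in 𝓝 x, DifferentiableAt ℝ g y)
    (hf₂ : HasDerivAt (deriv f) f₂ x) (hg₂ : HasDerivAt (deriv g) g₂ x) :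
    HasDerivAt (deriv fun y => f y * g y)
      (f₂ * g x + 2 * (deriv f x * deriv g x) + f x * g₂) x := by
  have hfg : (deriv fun y => f y * g y) =ᶠ[𝓝 x] fun y => deriv f y * g y + f y * deriv g y :=
    (hf.and hg).mono fun y h => (h.1.hasDerivAt.fun_mul h.2.hasDerivAt).deriv
  refine (((hf₂.fun_mul hg.self_of_nhds.hasDerivAt).fun_add
    (hf.self_of_nhds.hasDerivAt.fun_mul hg₂)).congr_of_eventuallyEq hfg).congr_deriv ?_
  ring

section Jets

variable {q φ M : ℝ → ℝ} {x k₂ : ℝ}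

theorem hasDerivAt_Afun (hK₂ : HasDerivAt (deriv fun y => q y * deriv φ y) k₂ x)
    (hq : DifferentiableAt ℝ q x) (hφ : DifferentiableAt ℝ φ x)
    (hφ₁ : DifferentiableAt ℝ (deriv φ) x) :
    HasDerivAt (Afun q φ) (k₂ * φ x + deriv (fun y => q y * deriv φ y) x * deriv φ x
      - (deriv q x * deriv φ x ^ 2 + 2 * q x * deriv φ x * deriv (deriv φ) x)) x := by
  refine ((hK₂.fun_mul hφ.hasDerivAt).fun_sub
    (hq.hasDerivAt.fun_mul (hφ₁.hasDerivAt.fun_pow 2))).congr_deriv ?_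
  ring

theorem hasDerivAt_Bfun (hKM₂ : HasDerivAt (deriv fun y => q y * deriv φ y * M y) k₂ x)
    (hq : DifferentiableAt ℝ q x) (hφ : DifferentiableAt ℝ φ x)
    (hφ₁ : DifferentiableAt ℝ (deriv φ) x) (hM : DifferentiableAt ℝ M x) :
    HasDerivAt (Bfun q φ M) (k₂ * φ x ^ 2 + (deriv (fun y => q y * deriv φ y) x * M x
      + q x * deriv φ x * deriv M x) * (2 * φ x * deriv φ x)) x := by
  refine (hKM₂.fun_mul (hφ.hasDerivAt.fun_pow 2)).congr_deriv ?_
  rw [deriv_fun_mul (c := fun y => q y * deriv φ y) (hq.fun_mul hφ₁) hM]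
  ring

theorem hasDerivAt_Cfun (hq : DifferentiableAt ℝ q x) (hφ : DifferentiableAt ℝ φ x)
    (hφ₁ : DifferentiableAt ℝ (deriv φ) x) (hM : DifferentiableAt ℝ M x) :
    HasDerivAt (Cfun q φ M) (deriv q x * φ x ^ 2 * deriv φ x ^ 2 * M x ^ 2
      + 2 * q x * φ x * deriv φ x * M x * (deriv φ x ^ 2 * M x + φ x * deriv (deriv φ) x * M x
        + φ x * deriv φ x * deriv M x)) x := by
  refine (((hq.hasDerivAt.fun_mul (hφ.hasDerivAt.fun_pow 2)).fun_mul
    (hφ₁.hasDerivAt.fun_pow 2)).fun_mul (hM.hasDerivAt.fun_pow 2)).congr_deriv ?_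
  ring

end Jets

theorem jet_identity_of_Afun_eq_zero {q q₁ φ φ₁ φ₂ M M₁ M₂ k k₂ B B₁ C C₁ : ℝ}
    (hk : k = q₁ * φ₁ + q * φ₂)
    (hA : k * φ - q * φ₁ ^ 2 = 0)
    (hA₁ : k₂ * φ + k * φ₁ - (q₁ * φ₁ ^ 2 + 2 * q * φ₁ * φ₂) = 0)
    (hB : B = (k * M + q * φ₁ * M₁) * φ ^ 2)
    (hB₁ : B₁ = (k₂ * M + 2 * (k * M₁) + q * φ₁ * M₂) * φ ^ 2
      + (k * M + q * φ₁ * M₁) * (2 * φ * φ₁))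
    (hC : C = q * φ ^ 2 * φ₁ ^ 2 * M ^ 2)
    (hC₁ : C₁ = q₁ * φ ^ 2 * φ₁ ^ 2 * M ^ 2
      + 2 * q * φ * φ₁ * M * (φ₁ ^ 2 * M + φ * φ₂ * M + φ * φ₁ * M₁))
    (hB0 : B ≠ 0) (hM : M ≠ 0) :
    (φ₁ * M - (C₁ * B - C * B₁) / B ^ 2) * B ^ 2 * q * φ₁ * M
      = C ^ 2 * (((q₁ * M₁ + q * M₂) * M - q * M₁ * M₁) / M ^ 2) := by
  rw [sub_mul, div_mul_cancel₀ _ (pow_ne_zero 2 hB0), mul_div_assoc',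
    eq_div_iff (pow_ne_zero 2 hM)]
  subst hB hB₁ hC hC₁ hk
  linear_combination q * φ ^ 4 * φ₁ * M ^ 6 * ((q₁ * φ₁ + q * φ₂) * hA₁ - k₂ * hA)

theorem stmt6_general (I : Set ℝ) (hI : IsOpen I)
    (q φ : ℝ → ℝ)
    (hq1 : ∀ x ∈ I, DifferentiableAt ℝ q x)
    (hq2 : ∀ x ∈ I, DifferentiableAt ℝ (deriv q) x)
    (hφ1 : ∀ x ∈ I, DifferentiableAt ℝ φ x)
    (hφ2 : ∀ x ∈ I, DifferentiableAt ℝ (deriv φ) x)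
    (hφ3 : ∀ x ∈ I, DifferentiableAt ℝ (deriv (deriv φ)) x)
    (M : ℝ → ℝ)
    (hMpos : ∀ x ∈ I, 0 < M x)
    (hM1 : ∀ x ∈ I, DifferentiableAt ℝ M x)
    (hM2 : ∀ x ∈ I, DifferentiableAt ℝ (deriv M) x)
    (h : ℝ → ℝ) (hh : ∀ x ∈ I, HasDerivAt h (deriv φ x * M x) x)
    (J : Set ℝ) (hJ : IsOpen J)
    (hJI : J ⊆ I)
    (hA0 : ∀ x ∈ J, Afun q φ x = 0)
    (hB : ∀ x ∈ J, Bfun q φ M x ≠ 0) :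
    ∀ x ∈ J,
      deriv (fun y => h y - Cfun q φ M y / Bfun q φ M y) x * (Bfun q φ M x) ^ 2 *
          q x * deriv φ x * M x =
        (Cfun q φ M x) ^ 2 * deriv (fun y => q y * deriv M y / M y) x := by
  intro x hx
  have hxI : x ∈ I := hJI hx
  have hnear : ∀ᶠ y in 𝓝 x, y ∈ I := hI.mem_nhds hxI
  have hq := hq1 x hxI
  have hφ := hφ1 x hxI
  have hφ' := hφ2 x hxI
  have hM := hM1 x hxI
  have hK₂ := hasDerivAt_deriv_mul (hnear.mono hq1) (hnear.mono hφ2)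
    (hq2 x hxI).hasDerivAt (hφ3 x hxI).hasDerivAt
  have hKM₂ := hasDerivAt_deriv_mul (hnear.mono fun y hy => (hq1 y hy).fun_mul (hφ2 y hy))
    (hnear.mono hM1) hK₂ (hM2 x hxI).hasDerivAt
  have hA₁ := (hasDerivAt_Afun hK₂ hq hφ hφ').unique
    ((hasDerivAt_const x 0).congr_of_eventuallyEq (eventually_of_mem (hJ.mem_nhds hx) hA0))
  have hC := hasDerivAt_Cfun hq hφ hφ' hM
  have hB₁ := hasDerivAt_Bfun hKM₂ hq hφ hφ' hM
  have hR := (hq.hasDerivAt.fun_mul (hM2 x hxI).hasDerivAt).fun_div hM.hasDerivAt (hMpos x hxI).ne'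
  rw [((hh x hxI).fun_sub (hC.fun_div hB₁ (hB x hx))).deriv, hR.deriv]
  exact jet_identity_of_Afun_eq_zero (deriv_fun_mul hq hφ') (hA0 x hx) hA₁
    (by rw [Bfun, deriv_fun_mul (c := fun y => q y * deriv φ y) (hq.fun_mul hφ') hM])
    rfl rfl rfl (hB x hx) (hMpos x hxI).ne'

/-- Lemma 6: on a subinterval `J` where `A = 0`, `φ' > 0` and `B ≠ 0`,
`(h − C/B)'·B²·q·φ'·M = C²·(q·M'/M)'`. -/
theorem stmt6 (I : Set ℝ) (hI : IsOpen I) (hne : I.Nonempty) (hconn : I.OrdConnected)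
    (q φ : ℝ → ℝ)
    (hqpos : ∀ x ∈ I, 0 < q x)
    (hq1 : ∀ x ∈ I, DifferentiableAt ℝ q x)
    (hq2 : ∀ x ∈ I, DifferentiableAt ℝ (deriv q) x)
    (hφ1 : ∀ x ∈ I, DifferentiableAt ℝ φ x)
    (hφ2 : ∀ x ∈ I, DifferentiableAt ℝ (deriv φ) x)
    (hφ3 : ∀ x ∈ I, DifferentiableAt ℝ (deriv (deriv φ)) x)
    (M : ℝ → ℝ)
    (hMpos : ∀ x ∈ I, 0 < M x)
    (hM1 : ∀ x ∈ I, DifferentiableAt ℝ M x)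
    (hM2 : ∀ x ∈ I, DifferentiableAt ℝ (deriv M) x)
    (h : ℝ → ℝ) (hh : ∀ x ∈ I, HasDerivAt h (deriv φ x * M x) x)
    (J : Set ℝ) (hJ : IsOpen J) (hJne : J.Nonempty) (hJconn : J.OrdConnected)
    (hJI : J ⊆ I)
    (hA0 : ∀ x ∈ J, Afun q φ x = 0)
    (hφ'pos : ∀ x ∈ J, 0 < deriv φ x)
    (hB : ∀ x ∈ J, Bfun q φ M x ≠ 0) :
    ∀ x ∈ J,
      deriv (fun y => h y - Cfun q φ M y / Bfun q φ M y) x * (Bfun q φ M x) ^ 2 *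
          q x * deriv φ x * M x =
        (Cfun q φ M x) ^ 2 * deriv (fun y => q y * deriv M y / M y) x :=
  stmt6_general I hI q φ hq1 hq2 hφ1 hφ2 hφ3 M hMpos hM1 hM2 h hh J hJ hJI hA0 hB
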